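/- Let u : ℕ → ℝ be a bounded nonnegative function with β_u = sup_{k≥0} u(k), let p ≥ 0 be a real number, and let F : Γ → ℂ. Then ∑_{σ ∈ Γ} λ_σ^{-2(p+1)}·#_u(σ)²·|F(σ)|² ≤ β_u²·∑_{σ ∈ Γ} λ_σ^{-2p}·|F(σ)|² (an inequality of sums valued in [0,∞]). Consequently, if Φ is a generalized functional with Fock transform F and ‖Φ‖_{-p} < ∞, then the 1D-GWN operator satisfies ‖N_u Φ‖_{-(p+1)} ≤ β_u·‖Φ‖_{-p}. -/

import Mathlib

/-!
Since `0 ≤ u ≤ β_u`, we have `#_u(σ) ≤ β_u · |σ|`, and `|σ| ≤ max σ + 1 ≤ λ_σ`. Hence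
`λ_σ^{-2(p+1)} #_u(σ)² ≤ β_u² λ_σ^{-2p}` termwise, and both inequalities follow by summing
over `Γ`.
-/

noncomputable def lam (σ : Finset ℕ) : ℝ := ∏ k ∈ σ, ((k : ℝ) + 1)

open Finset

theorem Finset.card_le_prod_add_one (σ : Finset ℕ) : σ.card ≤ ∏ k ∈ σ, (k + 1) := by
  induction σ using Finset.induction_on_max with
  | empty => simp
  | insert a s hlt ih =>
    have has : a ∉ s := fun h => lt_irrefl a (hlt a h)
    have hcard : s.card ≤ a := by
      simpa using card_le_card (fun x hx => mem_range.2 (hlt x hx) : s ⊆ range a)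
    have hprod : 1 ≤ ∏ k ∈ s, (k + 1) := one_le_prod' fun _ _ => Nat.le_add_left 1 _
    rw [card_insert_of_notMem has, prod_insert has]
    nlinarith

lemma lam_pos (σ : Finset ℕ) : 0 < lam σ :=
  prod_pos fun _ _ => by positivity

lemma card_le_lam (σ : Finset ℕ) : (σ.card : ℝ) ≤ lam σ := by
  unfold lam
  exact_mod_cast σ.card_le_prod_add_one

lemma sum_le_mul_lam {u : ℕ → ℝ} {β : ℝ} (hβ0 : 0 ≤ β) (huβ : ∀ k, u k ≤ β) (σ : Finset ℕ) :
    ∑ k ∈ σ, u k ≤ β * lam σ :=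
  calc ∑ k ∈ σ, u k ≤ σ.card • β := sum_le_card_nsmul σ u β fun k _ => huβ k
    _ = β * σ.card := by rw [nsmul_eq_mul, mul_comm]
    _ ≤ β * lam σ := mul_le_mul_of_nonneg_left (card_le_lam σ) hβ0

lemma lam_rpow_mul_sum_sq_le {u : ℕ → ℝ} {β : ℝ} (hu0 : ∀ k, 0 ≤ u k) (huβ : ∀ k, u k ≤ β)
    (p : ℝ) (σ : Finset ℕ) :
    lam σ ^ (-(2 * (p + 1))) * (∑ k ∈ σ, u k) ^ 2 ≤ β ^ 2 * lam σ ^ (-(2 * p)) := by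
  have hl := lam_pos σ
  have hβ0 : 0 ≤ β := (hu0 0).trans (huβ 0)
  have hsum : (∑ k ∈ σ, u k) ^ 2 ≤ (β * lam σ) ^ 2 :=
    pow_le_pow_left₀ (sum_nonneg fun k _ => hu0 k) (sum_le_mul_lam hβ0 huβ σ) 2
  calc lam σ ^ (-(2 * (p + 1))) * (∑ k ∈ σ, u k) ^ 2
      = lam σ ^ (-(2 * p)) * (∑ k ∈ σ, u k) ^ 2 / lam σ ^ 2 := by
        rw [show -(2 * (p + 1)) = -(2 * p) + -(2 : ℕ) by push_cast; ring, Real.rpow_add hl,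
          Real.rpow_neg hl.le ((2 : ℕ) : ℝ), Real.rpow_natCast, div_eq_mul_inv]
        ring
    _ ≤ lam σ ^ (-(2 * p)) * (β * lam σ) ^ 2 / lam σ ^ 2 := by gcongr
    _ = β ^ 2 * lam σ ^ (-(2 * p)) := by field_simp

section WeightedSums

variable {ι : Type*} {f g : ι → ℝ} {c : ℝ}

lemma tsum_ofReal_le_ofReal_mul_tsum (hc : 0 ≤ c) (hfg : ∀ i, f i ≤ c * g i) :
    ∑' i, ENNReal.ofReal (f i) ≤ ENNReal.ofReal c * ∑' i, ENNReal.ofReal (g i) :=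
  calc ∑' i, ENNReal.ofReal (f i) ≤ ∑' i, ENNReal.ofReal (c * g i) :=
        ENNReal.tsum_le_tsum fun i => ENNReal.ofReal_le_ofReal (hfg i)
    _ = ∑' i, ENNReal.ofReal c * ENNReal.ofReal (g i) := by
        simp only [ENNReal.ofReal_mul hc]
    _ = ENNReal.ofReal c * ∑' i, ENNReal.ofReal (g i) := ENNReal.tsum_mul_left

lemma summable_and_sqrt_tsum_le (hf : ∀ i, 0 ≤ f i) (hc : 0 ≤ c) (hfg : ∀ i, f i ≤ c ^ 2 * g i)
    (hg : Summable g) : Summable f ∧ √(∑' i, f i) ≤ c * √(∑' i, g i) := by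
  have hcg : Summable fun i => c ^ 2 * g i := hg.mul_left _
  have hf_sum : Summable f := hcg.of_nonneg_of_le hf hfg
  refine ⟨hf_sum, ?_⟩
  calc √(∑' i, f i) ≤ √(c ^ 2 * ∑' i, g i) := by
        rw [← tsum_mul_left]
        exact Real.sqrt_le_sqrt (hf_sum.tsum_le_tsum hfg hcg)
    _ = c * √(∑' i, g i) := by rw [Real.sqrt_mul (sq_nonneg c), Real.sqrt_sq hc]

end WeightedSums

theorem stmt9_general (u : ℕ → ℝ) (hu0 : ∀ k, 0 ≤ u k) (hub : BddAbove (Set.range u))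
    (β : ℝ) (hβ : β = ⨆ k, u k)
    (p : ℝ) (F : Finset ℕ → ℂ) :
    (∑' σ : Finset ℕ, ENNReal.ofReal (lam σ ^ (-(2*(p+1))) * (∑ k ∈ σ, u k)^2 * ‖F σ‖^2))
      ≤ ENNReal.ofReal (β^2) *
        ∑' σ : Finset ℕ, ENNReal.ofReal (lam σ ^ (-(2*p)) * ‖F σ‖^2) ∧
    (Summable (fun σ : Finset ℕ => lam σ ^ (-(2*p)) * ‖F σ‖^2) →
      Summable (fun σ : Finset ℕ => lam σ ^ (-(2*(p+1))) * (∑ k ∈ σ, u k)^2 * ‖F σ‖^2) ∧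
      Real.sqrt (∑' σ : Finset ℕ, lam σ ^ (-(2*(p+1))) * (∑ k ∈ σ, u k)^2 * ‖F σ‖^2)
        ≤ β * Real.sqrt (∑' σ : Finset ℕ, lam σ ^ (-(2*p)) * ‖F σ‖^2)) := by
  have huβ : ∀ k, u k ≤ β := fun k => hβ ▸ le_ciSup hub k
  have hβ0 : 0 ≤ β := (hu0 0).trans (huβ 0)
  have hterm : ∀ σ : Finset ℕ, lam σ ^ (-(2*(p+1))) * (∑ k ∈ σ, u k)^2 * ‖F σ‖^2
      ≤ β^2 * (lam σ ^ (-(2*p)) * ‖F σ‖^2) := fun σ => by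
    rw [← mul_assoc]
    exact mul_le_mul_of_nonneg_right (lam_rpow_mul_sum_sq_le hu0 huβ p σ) (by positivity)
  have hterm_nonneg : ∀ σ : Finset ℕ,
      0 ≤ lam σ ^ (-(2*(p+1))) * (∑ k ∈ σ, u k)^2 * ‖F σ‖^2 := fun σ => by
    have := (lam_pos σ).le
    positivity
  exact ⟨tsum_ofReal_le_ofReal_mul_tsum (sq_nonneg β) hterm,
    summable_and_sqrt_tsum_le hterm_nonneg hβ0 hterm⟩

theorem stmt9 (u : ℕ → ℝ) (hu0 : ∀ k, 0 ≤ u k) (hub : BddAbove (Set.range u))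
    (β : ℝ) (hβ : β = ⨆ k, u k)
    (p : ℝ) (hp : 0 ≤ p) (F : Finset ℕ → ℂ) :
    (∑' σ : Finset ℕ, ENNReal.ofReal (lam σ ^ (-(2*(p+1))) * (∑ k ∈ σ, u k)^2 * ‖F σ‖^2))
      ≤ ENNReal.ofReal (β^2) *
        ∑' σ : Finset ℕ, ENNReal.ofReal (lam σ ^ (-(2*p)) * ‖F σ‖^2) ∧
    (Summable (fun σ : Finset ℕ => lam σ ^ (-(2*p)) * ‖F σ‖^2) →
      Summable (fun σ : Finset ℕ => lam σ ^ (-(2*(p+1))) * (∑ k ∈ σ, u k)^2 * ‖F σ‖^2) ∧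
      Real.sqrt (∑' σ : Finset ℕ, lam σ ^ (-(2*(p+1))) * (∑ k ∈ σ, u k)^2 * ‖F σ‖^2)
        ≤ β * Real.sqrt (∑' σ : Finset ℕ, lam σ ^ (-(2*p)) * ‖F σ‖^2)) :=
  stmt9_general u hu0 hub β hβ p F
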